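/- Let (Ω, F, P) be a probability space, p, m ∈ ℕ, β₀ ∈ ℝ^p, and let f : ℝ^p → ℝ^m be Fréchet differentiable at β₀ with derivative given by the m × p real matrix f_d(β₀) (i.e. lim_{h→0} ‖f(β₀ + h) − f(β₀) − f_d(β₀)h‖₂/‖h‖₂ = 0). Let β̂_n : Ω → ℝ^p be measurable random vectors and r_n positive reals with r_n → ∞ such that r_n‖β̂_n − β₀‖₂ is bounded in probability. Then ‖r_n(f(β̂_n) − f(β₀)) − r_n f_d(β₀)(β̂_n − β₀)‖₂ converges to 0 in probability. -/

import Mathlib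

/-!
Given `δ, ε > 0`, pick `M` with `ℙ(r_n ‖β̂_n - β₀‖₂ > M) < ε` for all `n`. Off that event
`‖β̂_n - β₀‖₂ ≤ M / r_n → 0`, so differentiability bounds the rescaled remainder
`r_n ‖f(β̂_n) - f(β₀) - D(β̂_n - β₀)‖₂` by `(δ / M) · r_n ‖β̂_n - β₀‖₂ ≤ δ` for large `n`.
Thus the event `{remainder > δ}` eventually lies inside an event of probability `< ε`.
-/

open MeasureTheory ProbabilityTheory Filter

/-- Euclidean (ℓ₂) norm of a vector in ℝ^p. -/
noncomputable def l2 {p : ℕ} (v : Fin p → ℝ) : ℝ := Real.sqrt (∑ j, (v j) ^ 2)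

lemma l2_eq_norm_toLp {p : ℕ} (v : Fin p → ℝ) : l2 v = ‖WithLp.toLp 2 v‖ := by
  simp [l2, EuclideanSpace.norm_eq]

lemma l2_smul {p : ℕ} (c : ℝ) (v : Fin p → ℝ) : l2 (c • v) = |c| * l2 v := by
  simp only [l2_eq_norm_toLp, WithLp.toLp_smul, norm_smul, Real.norm_eq_abs]

lemma l2_eq_zero {p : ℕ} {v : Fin p → ℝ} : l2 v = 0 ↔ v = 0 := by
  rw [l2_eq_norm_toLp, norm_eq_zero, ← WithLp.toLp_zero 2, (WithLp.toLp_injective 2).eq_iff]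

lemma l2_nonneg {p : ℕ} (v : Fin p → ℝ) : 0 ≤ l2 v := by
  rw [l2_eq_norm_toLp]; exact norm_nonneg _

lemma l2_remainder_le_of_fderiv {p m : ℕ} {β₀ : Fin p → ℝ} {f : (Fin p → ℝ) → (Fin m → ℝ)}
    {D : Matrix (Fin m) (Fin p) ℝ}
    (hdiff : ∀ ε > (0 : ℝ), ∃ δ > (0 : ℝ), ∀ h : Fin p → ℝ,
      0 < l2 h → l2 h ≤ δ → l2 (f (β₀ + h) - f β₀ - D.mulVec h) ≤ ε * l2 h) :
    ∀ ε > (0 : ℝ), ∃ δ > (0 : ℝ), ∀ h : Fin p → ℝ,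
      l2 h ≤ δ → l2 (f (β₀ + h) - f β₀ - D.mulVec h) ≤ ε * l2 h := by
  intro ε hε
  obtain ⟨δ, hδ, hbound⟩ := hdiff ε hε
  refine ⟨δ, hδ, fun h hh => ?_⟩
  rcases (l2_nonneg h).eq_or_lt with hzero | hpos
  · obtain rfl := l2_eq_zero.mp hzero.symm
    simp [l2]
  · exact hbound h hpos hh

lemma eventually_mul_le_of_isLittleO {α : Type*} {a b : α → ℝ}
    (hab : ∀ ε > (0 : ℝ), ∃ δ > (0 : ℝ), ∀ x, a x ≤ δ → b x ≤ ε * a x)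
    {r : ℕ → ℝ} (hr : Tendsto r atTop atTop) {η M : ℝ} (hη : 0 < η) (hM : 0 < M) :
    ∀ᶠ n in atTop, ∀ x, r n * a x ≤ M → r n * b x ≤ η := by
  obtain ⟨δ, hδ, hbound⟩ := hab (η / M) (div_pos hη hM)
  filter_upwards [hr.eventually_gt_atTop 0, hr.eventually_ge_atTop (M / δ)]
    with n hrpos hrlarge x hx
  have hax : a x ≤ δ := by
    rw [div_le_iff₀ hδ] at hrlarge
    nlinarith
  calc r n * b x ≤ r n * (η / M * a x) := by gcongr; exact hbound x hax
    _ = η / M * (r n * a x) := by ring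
    _ ≤ η / M * M := by gcongr
    _ = η := div_mul_cancel₀ η hM.ne'

lemma tendsto_measure_lt_of_boundedInProbability {Ω : Type*} [MeasurableSpace Ω]
    {μ : Measure Ω} {X Y : ℕ → Ω → ℝ}
    (hX : ∀ ε > (0 : ℝ), ∃ M > (0 : ℝ), ∀ n, μ {ω | M < X n ω} < ENNReal.ofReal ε)
    (hXY : ∀ δ > (0 : ℝ), ∀ M > (0 : ℝ), ∀ᶠ n in atTop, ∀ ω, X n ω ≤ M → Y n ω ≤ δ)
    {δ : ℝ} (hδ : 0 < δ) :
    Tendsto (fun n => μ {ω | δ < Y n ω}) atTop (nhds 0) := by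
  rw [ENNReal.tendsto_atTop_zero]
  intro ε hε
  obtain ⟨εr, -, hεr_pos, hεr_lt⟩ := ENNReal.lt_iff_exists_real_btwn.mp hε
  obtain ⟨M, hM, hXM⟩ := hX εr (ENNReal.ofReal_pos.mp hεr_pos)
  obtain ⟨N, hN⟩ := (hXY δ hδ M hM).exists_forall_of_atTop
  refine ⟨N, fun n hn => ?_⟩
  have hsub : {ω | δ < Y n ω} ⊆ {ω | M < X n ω} := fun ω hω =>
    lt_of_not_ge fun hle => (hN n hn ω hle).not_gt hω
  calc μ {ω | δ < Y n ω} ≤ μ {ω | M < X n ω} := measure_mono hsub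
    _ ≤ ENNReal.ofReal εr := (hXM n).le
    _ ≤ ε := hεr_lt.le

theorem stmt_6_general {Ω : Type*} [MeasureSpace Ω]
    (p m : ℕ) (β₀ : Fin p → ℝ) (f : (Fin p → ℝ) → (Fin m → ℝ))
    (D : Matrix (Fin m) (Fin p) ℝ)
    (hdiff : ∀ ε > (0 : ℝ), ∃ δ > (0 : ℝ), ∀ h : Fin p → ℝ,
      0 < l2 h → l2 h ≤ δ →
      l2 (f (β₀ + h) - f β₀ - D.mulVec h) ≤ ε * l2 h)
    (βhat : ℕ → Ω → (Fin p → ℝ))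
    (r : ℕ → ℝ) (hrtop : Tendsto r atTop atTop)
    (hOp : ∀ ε > (0 : ℝ), ∃ M > (0 : ℝ), ∀ n,
      ℙ {ω | M < r n * l2 (βhat n ω - β₀)} < ENNReal.ofReal ε) :
    ∀ δ > (0 : ℝ),
      Tendsto (fun n =>
          ℙ {ω | δ < l2 (r n • (f (βhat n ω) - f β₀) -
            r n • D.mulVec (βhat n ω - β₀))})
        atTop (nhds 0) := by
  refine fun δ hδ => tendsto_measure_lt_of_boundedInProbability hOp (fun η hη M hM => ?_) hδ
  filter_upwards [eventually_mul_le_of_isLittleO (l2_remainder_le_of_fderiv hdiff) hrtop hη hM,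
    hrtop.eventually_gt_atTop 0] with n hsmall hrpos ω hω
  have hremainder := hsmall (βhat n ω - β₀) hω
  rwa [add_sub_cancel, ← abs_of_pos hrpos, ← l2_smul, smul_sub] at hremainder

/-- If `f` is Fréchet differentiable at `β₀` with derivative matrix `D`, and
`r_n ‖β̂_n - β₀‖₂ = O_p(1)`, then
`‖r_n (f(β̂_n) - f(β₀)) - r_n D (β̂_n - β₀)‖₂ →p 0`. -/
theorem stmt_6 {Ω : Type*} [MeasureSpace Ω] [IsProbabilityMeasure (ℙ : Measure Ω)]
    (p m : ℕ) (β₀ : Fin p → ℝ) (f : (Fin p → ℝ) → (Fin m → ℝ))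
    (D : Matrix (Fin m) (Fin p) ℝ)
    (hdiff : ∀ ε > (0 : ℝ), ∃ δ > (0 : ℝ), ∀ h : Fin p → ℝ,
      0 < l2 h → l2 h ≤ δ →
      l2 (f (β₀ + h) - f β₀ - D.mulVec h) ≤ ε * l2 h)
    (βhat : ℕ → Ω → (Fin p → ℝ)) (hmeas : ∀ n, Measurable (βhat n))
    (r : ℕ → ℝ) (hrpos : ∀ n, 0 < r n) (hrtop : Tendsto r atTop atTop)
    (hOp : ∀ ε > (0 : ℝ), ∃ M > (0 : ℝ), ∀ n,
      ℙ {ω | M < r n * l2 (βhat n ω - β₀)} < ENNReal.ofReal ε) :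
    ∀ δ > (0 : ℝ),
      Tendsto (fun n =>
          ℙ {ω | δ < l2 (r n • (f (βhat n ω) - f β₀) -
            r n • D.mulVec (βhat n ω - β₀))})
        atTop (nhds 0) :=
  stmt_6_general p m β₀ f D hdiff βhat r hrtop hOp
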